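/- There exist finite alphabets Σ and Γ, a semilinear language L ⊆ Σ*, and a homomorphism h : Γ* → Σ* such that h⁻¹(L) = {w ∈ Γ* : h(w) ∈ L} is not a semilinear language. (That is, the class of semilinear languages is not closed under inverse homomorphism.) -/

import Mathlib

/-- A set `Q ⊆ ℕ^α` is linear if it has a constant vector `v₀` and finitely many
period vectors `v₁, …, v_l` with `Q = {v₀ + i₁v₁ + ⋯ + i_l v_l}`. -/
def IsLinearSetFin {α : Type*} (Q : Set (α → ℕ)) : Prop :=
  ∃ (v₀ : α → ℕ) (l : ℕ) (v : Fin l → α → ℕ),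
    Q = { x | ∃ c : Fin l → ℕ, x = v₀ + ∑ j, c j • v j }

/-- A set is semilinear if it is a finite union of linear sets. -/
def IsSemilinearSetFin {α : Type*} (Q : Set (α → ℕ)) : Prop :=
  ∃ (n : ℕ) (Qs : Fin n → Set (α → ℕ)),
    (∀ i, IsLinearSetFin (Qs i)) ∧ Q = ⋃ i, Qs i

open Classical in
/-- The Parikh image of a word: `parikhWord w a = |w|_a`. -/
noncomputable def parikhWord {σ : Type*} (w : List σ) : σ → ℕ :=
  fun a => w.count a

/-- A language is semilinear if its Parikh image is a semilinear set. -/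
def IsSemilinearLanguage {σ : Type*} (L : Set (List σ)) : Prop :=
  IsSemilinearSetFin (parikhWord '' L)

/-!
Let `L ⊆ {a, b}*` consist of all words except `(ab)ⁿ` with `n` not a perfect square. Every vector
`(i, j)` is the Parikh image of `bʲaⁱ`, which is never a nonempty power of `ab`, so `ψ(L) = ℕ²` is
semilinear. For `h : c ↦ ab` we get `h⁻¹(L) = {cⁿ : n a square}`, whose Parikh image, the set of
squares, is infinite but contains no infinite arithmetic progression, so it is not semilinear.
-/

section Parikh

variable {σ : Type*}

lemma parikhWord_apply [DecidableEq σ] (w : List σ) (a : σ) : parikhWord w a = w.count a := by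
  unfold parikhWord
  congr
  exact Subsingleton.elim _ _

lemma parikhWord_of_subsingleton [Subsingleton σ] (w : List σ) :
    parikhWord w = fun _ => w.length := by
  classical
  funext a
  rw [parikhWord_apply, List.count_eq_length]
  exact fun b _ => Subsingleton.elim a b

end Parikh

section Semilinear

variable {α : Type*}

lemma IsLinearSetFin.isSemilinearSetFin {Q : Set (α → ℕ)} (hQ : IsLinearSetFin Q) :
    IsSemilinearSetFin Q :=
  ⟨1, fun _ => Q, fun _ => hQ, (Set.iUnion_const Q).symm⟩

lemma isLinearSetFin_univ [Fintype α] : IsLinearSetFin (Set.univ : Set (α → ℕ)) := by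
  classical
  let e := Fintype.equivFin α
  refine ⟨0, Fintype.card α, fun j => Pi.single (e.symm j) 1, ?_⟩
  refine (Set.eq_univ_of_forall fun x => ?_).symm
  rw [Set.mem_ofPred_eq]
  refine ⟨fun j => x (e.symm j), ?_⟩
  rw [zero_add, e.symm.sum_comp (fun a => x a • Pi.single a 1)]
  simp only [← Pi.single_smul', smul_eq_mul, mul_one, Finset.univ_sum_single]

lemma IsLinearSetFin.finite_or_exists_ray {Q : Set (α → ℕ)} (hQ : IsLinearSetFin Q) :
    Q.Finite ∨ ∃ v₀ v : α → ℕ, v ≠ 0 ∧ ∀ c : ℕ, v₀ + c • v ∈ Q := by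
  classical
  obtain ⟨v₀, l, v, rfl⟩ := hQ
  by_cases hv : ∀ j, v j = 0
  · refine .inl ((Set.finite_singleton v₀).subset ?_)
    intro x hx
    obtain ⟨c, rfl⟩ := hx
    simp [hv]
  · obtain ⟨j, hj⟩ := not_forall.mp hv
    refine .inr ⟨v₀, v j, hj, fun c => ?_⟩
    rw [Set.mem_ofPred_eq]
    refine ⟨Pi.single j c, ?_⟩
    rw [Finset.sum_eq_single j (fun i _ hi => by simp [hi]) (by simp), Pi.single_eq_same]

lemma IsSemilinearSetFin.finite_or_exists_ray {Q : Set (α → ℕ)} (hQ : IsSemilinearSetFin Q) :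
    Q.Finite ∨ ∃ v₀ v : α → ℕ, v ≠ 0 ∧ ∀ c : ℕ, v₀ + c • v ∈ Q := by
  obtain ⟨n, Qs, hlin, rfl⟩ := hQ
  by_cases hray : ∃ i v₀, ∃ v : α → ℕ, v ≠ 0 ∧ ∀ c : ℕ, v₀ + c • v ∈ Qs i
  · obtain ⟨i, v₀, v, hv, hmem⟩ := hray
    exact .inr ⟨v₀, v, hv, fun c => Set.mem_iUnion_of_mem i (hmem c)⟩
  · push Not at hray
    refine .inl (Set.finite_iUnion fun i => ((hlin i).finite_or_exists_ray).resolve_right ?_)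
    rintro ⟨v₀, v, hv, hmem⟩
    obtain ⟨c, hc⟩ := hray i v₀ v hv
    exact hc (hmem c)

end Semilinear

/-- If `N + d² = s²` and `N + d² + d = t²`, then `s ≥ d`, so `t² ≥ (s + 1)² > s² + d`. -/
lemma not_forall_isSquare_add_mul {N d : ℕ} (hd : 0 < d) : ¬ ∀ c, IsSquare (N + c * d) := by
  intro h
  obtain ⟨s, hs⟩ := h d
  obtain ⟨t, ht⟩ := h (d + 1)
  have hds : d ≤ s := by nlinarith
  have hst : s + 1 ≤ t := by nlinarith
  nlinarith

lemma not_isSemilinearSetFin_setOf_isSquare :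
    ¬ IsSemilinearSetFin {g : Unit → ℕ | IsSquare (g ())} := by
  intro hS
  rcases hS.finite_or_exists_ray with hfin | ⟨v₀, v, hv, hmem⟩
  · refine Set.infinite_of_injective_forall_mem (f := fun k (_ : Unit) => k * k) ?_
      (fun k => show IsSquare (k * k) from ⟨k, rfl⟩) hfin
    intro a b hab
    exact Nat.mul_self_inj.mp (congrFun hab ())
  · have hv' : 0 < v () := Nat.pos_of_ne_zero fun h => hv (funext fun _ => h)
    exact not_forall_isSquare_add_mul hv' hmem

lemma parikhWord_image_setOf_isSquare_length :
    parikhWord '' {w : List Unit | IsSquare w.length} = {g : Unit → ℕ | IsSquare (g ())} := by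
  ext g
  simp only [Set.mem_image, Set.mem_ofPred_eq, parikhWord_of_subsingleton]
  constructor
  · rintro ⟨w, hw, rfl⟩
    exact hw
  · intro hg
    exact ⟨List.replicate (g ()) (), by simpa using hg, funext fun _ => by simp⟩

/-- The word `(ab)ⁿ`, with `a = true` and `b = false`. -/
def abPow (n : ℕ) : List Bool := (List.replicate n [true, false]).flatten

lemma abPow_succ (n : ℕ) : abPow (n + 1) = true :: false :: abPow n := rfl

lemma length_abPow (n : ℕ) : (abPow n).length = 2 * n := by
  induction n with
  | zero => rfl
  | succ n ih => rw [abPow_succ]; simp only [List.length_cons, ih]; ring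

lemma abPow_injective : Function.Injective abPow := fun m n h => by
  have := congrArg List.length h
  rw [length_abPow, length_abPow] at this
  omega

def squareAbPowLang : Set (List Bool) := {w | ∀ n, w = abPow n → IsSquare n}

lemma abPow_mem_squareAbPowLang {n : ℕ} : abPow n ∈ squareAbPowLang ↔ IsSquare n :=
  ⟨fun h => h n rfl, fun hn _ hm => abPow_injective hm ▸ hn⟩

lemma replicate_append_replicate_ne_abPow_succ (i j n : ℕ) :
    List.replicate j false ++ List.replicate i true ≠ abPow (n + 1) := by
  rw [abPow_succ]
  cases j with
  | zero =>
    intro h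
    have hfalse := congrArg (false ∈ ·) h
    simp at hfalse
  | succ j => simp [List.replicate_succ]

lemma parikhWord_image_squareAbPowLang : parikhWord '' squareAbPowLang = Set.univ := by
  refine Set.eq_univ_of_forall fun g => ⟨List.replicate (g false) false ++
    List.replicate (g true) true, ?_, ?_⟩
  · rintro (_ | n) hn
    · exact ⟨0, rfl⟩
    · exact absurd hn (replicate_append_replicate_ne_abPow_succ _ _ n)
  · funext b
    cases b <;> simp [parikhWord_apply, List.count_replicate]

lemma flatten_map_const_mem_squareAbPowLang_iff (w : List Unit) :
    (w.map fun _ => [true, false]).flatten ∈ squareAbPowLang ↔ IsSquare w.length := by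
  rw [List.map_const', ← abPow, abPow_mem_squareAbPowLang]

/-- the class of semilinear languages is not closed under inverse
homomorphism: there are finite alphabets σ, γ, a semilinear language L ⊆ σ*, and a
homomorphism h : γ* → σ* (induced by f : γ → σ*) with h⁻¹(L) not semilinear. -/
theorem semilinear_not_closed_inv_hom :
    ∃ (σ γ : Type) (_ : Fintype σ) (_ : Fintype γ)
      (L : Set (List σ)) (f : γ → List σ),
      IsSemilinearLanguage L ∧
      ¬ IsSemilinearLanguage { w : List γ | (w.map f).flatten ∈ L } := by
  refine ⟨Bool, Unit, inferInstance, inferInstance, squareAbPowLang, fun _ => [true, false], ?_, ?_⟩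
  · rw [IsSemilinearLanguage, parikhWord_image_squareAbPowLang]
    exact isLinearSetFin_univ.isSemilinearSetFin
  · simp only [IsSemilinearLanguage, flatten_map_const_mem_squareAbPowLang_iff,
      parikhWord_image_setOf_isSquare_length]
    exact not_isSemilinearSetFin_setOf_isSquare
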